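/- arXiv:2105.03606 — 2 statements merged into one kernel-verified Lean document; each statement's English description precedes it below -/
import Mathlib

section
/- Multi-channel entropy bound: if Q is a uniquely decodable (q_1,…,q_n)-ary code for a source Z with probability distribution (p_1,…,p_m) where every p_j > 0, then Σ_{j=1}^m p_j Σ_{i=1}^n ℓ_i^j ln q_i ≥ H(Z), where H(Z) = −Σ_{j=1}^m p_j ln p_j. -/
/-- Channel-wise concatenation of the codewords of a finite sequence of source symbols:
the `i`-th component is the concatenation of the `i`-th components of the codewords. -/
def encodeSeq {n m : ℕ} {q : Fin n → ℕ} (C : Fin m → ∀ i, List (Fin (q i)))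
    (s : List (Fin m)) : ∀ i, List (Fin (q i)) :=
  fun i => (s.map fun j => C j i).flatten

/-- A multi-channel source code is uniquely decodable if any two distinct finite sequences of
source symbols yield distinct channel-wise concatenations of their codewords. -/
def UniquelyDecodable {n m : ℕ} {q : Fin n → ℕ}
    (C : Fin m → ∀ i, List (Fin (q i))) : Prop :=
  Function.Injective (encodeSeq C)

/-!
McMillan's counting argument works channel by channel. With the weight
`w(x) = ∏ᵢ qᵢ^(-|xᵢ|)`, which is multiplicative under channel-wise concatenation, the `k`-th
power of the Kraft sum `S = ∑ⱼ w(Cⱼ)` is the total weight of the encodings of all length-`k`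
source sequences. By unique decodability, at most `∏ᵢ qᵢ^vᵢ` of them have length vector `v`,
each of weight `∏ᵢ qᵢ^(-vᵢ)`, so `S^k` is at most the number `(kB + 1)^n` of possible length
vectors, `B` bounding all codeword lengths. Polynomial growth of `S^k` forces `S ≤ 1`, and
Gibbs' inequality against the sub-probability weights `w(Cⱼ)` gives the bound, since
`-ln w(Cⱼ)` is the description length.
-/

open Finset Real Filter

theorem sum_mul_log_le_sum_mul_log {ι : Type*} [Fintype ι] {p w : ι → ℝ}
    (hp : ∀ j, 0 < p j) (hw : ∀ j, 0 < w j) (hwp : ∑ j, w j ≤ ∑ j, p j) :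
    ∑ j, p j * log (w j) ≤ ∑ j, p j * log (p j) := by
  have termwise : ∀ j, p j * log (w j) - p j * log (p j) ≤ w j - p j := fun j =>
    calc p j * log (w j) - p j * log (p j) = p j * log (w j / p j) := by
          rw [log_div (hw j).ne' (hp j).ne']; ring
      _ ≤ p j * (w j / p j - 1) :=
          mul_le_mul_of_nonneg_left (log_le_sub_one_of_pos (div_pos (hw j) (hp j))) (hp j).le
      _ = w j - p j := by rw [mul_sub, mul_div_cancel₀ _ (hp j).ne', mul_one]
  have := sum_le_sum fun j (_ : j ∈ univ) => termwise j
  rw [sum_sub_distrib, sum_sub_distrib] at this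
  linarith

theorem le_one_of_eventually_pow_le_mul_pow {x c : ℝ} {d : ℕ}
    (h : ∀ᶠ k : ℕ in atTop, x ^ k ≤ c * (k : ℝ) ^ d) : x ≤ 1 := by
  by_contra! hx
  obtain ⟨k, hle, hsmall⟩ := (h.and <|
    ((isLittleO_pow_const_const_pow_of_one_lt d hx).const_mul_left c).def one_half_pos).exists
  have hxk : 0 < x ^ k := pow_pos (one_pos.trans hx) k
  have : x ^ k ≤ x ^ k / 2 :=
    calc x ^ k ≤ c * (k : ℝ) ^ d := hle
      _ ≤ ‖c * (k : ℝ) ^ d‖ := le_norm_self _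
      _ ≤ 1 / 2 * ‖x ^ k‖ := hsmall
      _ = x ^ k / 2 := by rw [norm_of_nonneg hxk.le]; ring
  linarith

section KraftWeight

variable {n : ℕ} {q : Fin n → ℕ}

def lengthVec (x : ∀ i, List (Fin (q i))) : Fin n → ℕ := fun i => (x i).length

noncomputable def kraftWeight (x : ∀ i, List (Fin (q i))) : ℝ :=
  ∏ i, ((q i : ℝ)⁻¹) ^ lengthVec x i

theorem inv_pow_length_pos {k : ℕ} (l : List (Fin k)) : 0 < ((k : ℝ)⁻¹) ^ l.length := by
  cases l with
  | nil => simp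
  | cons a _ => have : 0 < k := a.pos; positivity

theorem kraftWeight_pos (x : ∀ i, List (Fin (q i))) : 0 < kraftWeight x :=
  prod_pos fun i _ => inv_pow_length_pos (x i)

theorem log_kraftWeight (x : ∀ i, List (Fin (q i))) :
    log (kraftWeight x) = -∑ i, ((x i).length : ℝ) * log (q i) := by
  unfold kraftWeight lengthVec
  rw [log_prod fun i _ => (inv_pow_length_pos (x i)).ne', ← sum_neg_distrib]
  simp only [log_pow, log_inv, mul_neg]

theorem kraftWeight_encodeSeq {m : ℕ} (C : Fin m → ∀ i, List (Fin (q i))) (s : List (Fin m)) :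
    kraftWeight (encodeSeq C s) = (s.map fun j => kraftWeight (C j)).prod := by
  induction s with
  | nil => simp [kraftWeight, lengthVec, encodeSeq]
  | cons j s ih =>
    rw [List.map_cons, List.prod_cons, ← ih]
    simp only [kraftWeight, lengthVec, encodeSeq, List.map_cons, List.flatten_cons,
      List.length_append, pow_add, prod_mul_distrib]

theorem lengthVec_encodeSeq_ofFn {m k : ℕ} (C : Fin m → ∀ i, List (Fin (q i)))
    (f : Fin k → Fin m) : lengthVec (encodeSeq C (List.ofFn f)) = ∑ t, lengthVec (C (f t)) := by
  funext i
  simp [lengthVec, encodeSeq, List.length_flatten, List.map_ofFn, List.sum_ofFn, Function.comp_def]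

theorem card_filter_lengths_eq_le {α : Type*} [Fintype α] {g : α → ∀ i, List (Fin (q i))}
    (hg : Function.Injective g) (v : Fin n → ℕ) :
    #{a | lengthVec (g a) = v} ≤ ∏ i, q i ^ v i := by
  let toVec (a : {a // lengthVec (g a) = v}) : ∀ i, List.Vector (Fin (q i)) (v i) :=
    fun i => ⟨g a i, congrFun a.2 i⟩
  have htoVec : Function.Injective toVec := fun a b hab =>
    Subtype.ext <| hg <| funext fun i => congrArg Subtype.val (congrFun hab i)
  simpa [Fintype.card_subtype, Fintype.card_pi, card_vector] using
    Fintype.card_le_of_injective toVec htoVec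

theorem sum_kraftWeight_le_card_image {α : Type*} [Fintype α] {g : α → ∀ i, List (Fin (q i))}
    (hg : Function.Injective g) :
    ∑ a, kraftWeight (g a) ≤ #(univ.image fun a => lengthVec (g a)) := by
  rw [← sum_fiberwise_of_maps_to fun a _ => mem_image_of_mem (lengthVec ∘ g) (mem_univ a),
    card_eq_sum_ones, Nat.cast_sum, Nat.cast_one]
  refine sum_le_sum fun v _ => ?_
  calc ∑ a with lengthVec (g a) = v, kraftWeight (g a)
      = #{a | lengthVec (g a) = v} * ∏ i, ((q i : ℝ)⁻¹) ^ v i := by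
        rw [sum_congr rfl fun a ha => ?_, sum_const, nsmul_eq_mul]
        rw [kraftWeight, (mem_filter.1 ha).2]
    _ ≤ ((∏ i, q i ^ v i : ℕ) : ℝ) * ∏ i, ((q i : ℝ)⁻¹) ^ v i := by
        gcongr
        exact_mod_cast card_filter_lengths_eq_le hg v
    _ = ∏ i, ((q i : ℝ) * (q i : ℝ)⁻¹) ^ v i := by
        push_cast
        rw [← prod_mul_distrib]
        simp only [mul_pow]
    _ ≤ 1 := prod_le_one (fun i _ => by positivity) fun i _ =>
        pow_le_one₀ (by positivity) mul_inv_le_one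

theorem UniquelyDecodable.sum_kraftWeight_pow_le {m : ℕ}
    {C : Fin m → ∀ i, List (Fin (q i))} (hud : UniquelyDecodable C) {B : ℕ}
    (hB : ∀ j i, (C j i).length ≤ B) (k : ℕ) :
    (∑ j, kraftWeight (C j)) ^ k ≤ ((k * B + 1 : ℕ) : ℝ) ^ n := by
  have hlengths : univ.image (fun f : Fin k → Fin m => lengthVec (encodeSeq C (List.ofFn f))) ⊆
      Fintype.piFinset fun _ => range (k * B + 1) := by
    intro v hv
    obtain ⟨f, -, rfl⟩ := mem_image.1 hv
    simp only [Fintype.mem_piFinset, mem_range, Nat.lt_succ_iff, lengthVec_encodeSeq_ofFn,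
      Finset.sum_apply]
    intro i
    calc ∑ t, lengthVec (C (f t)) i ≤ ∑ _t : Fin k, B := sum_le_sum fun t _ => hB (f t) i
      _ = k * B := by simp
  calc (∑ j, kraftWeight (C j)) ^ k
      = ∑ f : Fin k → Fin m, kraftWeight (encodeSeq C (List.ofFn f)) := by
        simp [Fintype.sum_pow, kraftWeight_encodeSeq, List.map_ofFn, List.prod_ofFn]
    _ ≤ #(univ.image fun f : Fin k → Fin m => lengthVec (encodeSeq C (List.ofFn f))) :=
        sum_kraftWeight_le_card_image (hud.comp List.ofFn_injective)
    _ ≤ #(Fintype.piFinset fun _ : Fin n => range (k * B + 1)) := by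
        exact_mod_cast card_le_card hlengths
    _ = ((k * B + 1 : ℕ) : ℝ) ^ n := by simp

theorem UniquelyDecodable.sum_kraftWeight_le_one {m : ℕ}
    {C : Fin m → ∀ i, List (Fin (q i))} (hud : UniquelyDecodable C) :
    ∑ j, kraftWeight (C j) ≤ 1 := by
  obtain ⟨B, hB⟩ := Finite.exists_le fun ji : Fin m × Fin n => (C ji.1 ji.2).length
  refine le_one_of_eventually_pow_le_mul_pow (c := ((B : ℝ) + 1) ^ n) (d := n) ?_
  filter_upwards [eventually_ge_atTop 1] with k hk
  calc (∑ j, kraftWeight (C j)) ^ k ≤ ((k * B + 1 : ℕ) : ℝ) ^ n :=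
        hud.sum_kraftWeight_pow_le (fun j i => hB (j, i)) k
    _ ≤ (((B : ℝ) + 1) * k) ^ n := by
        have : (1 : ℝ) ≤ k := by exact_mod_cast hk
        gcongr
        push_cast
        nlinarith
    _ = ((B : ℝ) + 1) ^ n * (k : ℝ) ^ n := mul_pow _ _ _

end KraftWeight

theorem multichannel_entropy_bound_general (n m : ℕ) (q : Fin n → ℕ)
    (p : Fin m → ℝ) (hp : ∀ j, 0 < p j) (hsum : ∑ j, p j = 1)
    (C : Fin m → ∀ i, List (Fin (q i)))
    (hud : UniquelyDecodable C) :
    ∑ j, p j * ∑ i, ((C j i).length : ℝ) * Real.log (q i) ≥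
      -∑ j, p j * Real.log (p j) := by
  have gibbs := sum_mul_log_le_sum_mul_log hp (fun j => kraftWeight_pos (C j))
    (hsum ▸ hud.sum_kraftWeight_le_one)
  simp only [log_kraftWeight, mul_neg, sum_neg_distrib] at gibbs
  linarith

/-- **Multi-channel entropy bound**: if `C` is a uniquely decodable `(q 1, …, q n)`-ary code
for a source with probability distribution `p` (all masses positive), then the expected
codeword description length `∑ j, p j * ∑ i, ℓᵢʲ * ln (q i)` (in nats) is at least the
entropy `H = -∑ j, p j * ln (p j)`. -/
theorem multichannel_entropy_bound (n m : ℕ) (q : Fin n → ℕ)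
    (hq : ∀ i, 2 ≤ q i) (hmono : Monotone q)
    (p : Fin m → ℝ) (hp : ∀ j, 0 < p j) (hsum : ∑ j, p j = 1)
    (C : Fin m → ∀ i, List (Fin (q i)))
    (hud : UniquelyDecodable C) :
    ∑ j, p j * ∑ i, ((C j i).length : ℝ) * Real.log (q i) ≥
      -∑ j, p j * Real.log (p j) :=
  multichannel_entropy_bound_general n m q p hp hsum C hud
end

section
/- Every 2-channel prefix code with finitely many codewords is tree-decodable: there exists a decoding tree whose leaves' associated words are exactly the codewords of the code. -/
/-- Two multi-channel words are prefix-free (to each other) if there exists at least one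
channel `i` such that neither word's `i`-th component is a prefix of the other's. -/
def PrefixFree {n : ℕ} {q : Fin n → ℕ} (w v : ∀ i, List (Fin (q i))) : Prop :=
  ∃ i, ¬ (w i <+: v i) ∧ ¬ (v i <+: w i)

/-- A multi-channel prefix code: every pair of codewords of distinct source symbols is
prefix-free. -/
def IsPrefixCode {n m : ℕ} {q : Fin n → ℕ} (C : Fin m → ∀ i, List (Fin (q i))) : Prop :=
  ∀ a b, a ≠ b → PrefixFree (C a) (C b)

/-- A multi-channel decoding tree for an `n`-channel system with alphabet sizes `q i`:
every internal node is assigned a class `i`, and its outgoing edges are labeled by distinct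
symbols of the `i`-th alphabet (so it has at most `q i` children); `children a` is the
subtree reached by the edge labeled `a`, if present. -/
inductive DecTree (n : ℕ) (q : Fin n → ℕ) : Type
  | leaf : DecTree n q
  | node (i : Fin n) (children : Fin (q i) → Option (DecTree n q)) : DecTree n q

/-- Well-formedness of a decoding tree: every internal node has at least one child and all
its subtrees are well-formed. -/
inductive DecTree.WF {n : ℕ} {q : Fin n → ℕ} : DecTree n q → Prop
  | leaf : DecTree.WF .leaf
  | node (i : Fin n) (c : Fin (q i) → Option (DecTree n q)) :
      (∃ a, c a ≠ none) → (∀ a t, c a = some t → DecTree.WF t) →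
      DecTree.WF (.node i c)

/-- `LeafWord t w` holds iff `w` is the word associated with some leaf of the decoding tree
`t`: for each internal node of class `i` on the root-to-leaf path, the outgoing edge label is
appended to the `i`-th component. -/
inductive DecTree.LeafWord {n : ℕ} {q : Fin n → ℕ} :
    DecTree n q → (∀ i, List (Fin (q i))) → Prop
  | leaf : DecTree.LeafWord .leaf (fun _ => [])
  | node {i : Fin n} {c : Fin (q i) → Option (DecTree n q)} {a : Fin (q i)}
      {t : DecTree n q} {w : ∀ i', List (Fin (q i'))} :
      c a = some t → DecTree.LeafWord t w →
      DecTree.LeafWord (.node i c) (Function.update w i (a :: w i))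

/-!
Split the code on the first symbol of a channel on which no codeword is empty: the codewords
starting with `a` there, with that symbol removed, again form a prefix code, of smaller total
length, and decoding trees for these subcodes hang below a root of that class. With two channels
such a channel always exists unless the code is the single empty word: a codeword empty on
channel `0` and another one empty on channel `1` would be prefixes of each other on both channels.
-/

open Function

abbrev MultiWord {n : ℕ} (q : Fin n → ℕ) : Type := ∀ i, List (Fin (q i))

namespace MultiWord

variable {n : ℕ} {q : Fin n → ℕ}

def nil : MultiWord q := fun _ => []

def cons (i : Fin n) (a : Fin (q i)) (w : MultiWord q) : MultiWord q :=
  update w i (a :: w i)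

def totalLength (w : MultiWord q) : ℕ := ∑ i, (w i).length

theorem cons_apply_self (i : Fin n) (a : Fin (q i)) (w : MultiWord q) :
    cons i a w i = a :: w i :=
  update_self ..

theorem cons_apply_of_ne {i j : Fin n} (h : j ≠ i) (a : Fin (q i)) (w : MultiWord q) :
    cons i a w j = w j :=
  update_of_ne h ..

theorem cons_injective (i : Fin n) (a : Fin (q i)) : Injective (cons i a) := by
  intro w v h
  funext j
  by_cases hj : j = i
  · subst hj
    simpa only [cons_apply_self, List.cons.injEq, true_and] using congrFun h j
  · simpa only [cons_apply_of_ne hj] using congrFun h j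

theorem totalLength_cons (i : Fin n) (a : Fin (q i)) (w : MultiWord q) :
    (cons i a w).totalLength = w.totalLength + 1 := by
  unfold totalLength
  rw [← Finset.add_sum_erase _ _ (Finset.mem_univ i),
    ← Finset.add_sum_erase _ _ (Finset.mem_univ i), Finset.sum_congr rfl fun j hj => by rw [cons_apply_of_ne (Finset.ne_of_mem_erase hj)],
    cons_apply_self, List.length_cons]
  ring

theorem exists_cons_eq_of_ne_nil {w : MultiWord q} {i : Fin n} (h : w i ≠ []) :
    ∃ a v, cons i a v = w := by
  obtain ⟨a, l, hw⟩ := List.exists_cons_of_ne_nil h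
  refine ⟨a, update w i l, ?_⟩
  rw [cons, update_self, update_idem, ← hw, update_eq_self]

theorem cons_apply_prefix_cons_apply_iff (i : Fin n) (a : Fin (q i)) (w v : MultiWord q)
    (j : Fin n) : cons i a w j <+: cons i a v j ↔ w j <+: v j := by
  by_cases hj : j = i
  · subst hj
    simp only [cons_apply_self, List.cons_prefix_cons, true_and]
  · simp only [cons_apply_of_ne hj]

theorem prefixFree_cons_iff (i : Fin n) (a : Fin (q i)) (w v : MultiWord q) :
    PrefixFree (cons i a w) (cons i a v) ↔ PrefixFree w v := by
  simp only [PrefixFree, cons_apply_prefix_cons_apply_iff]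

end MultiWord

open MultiWord

section

variable {n : ℕ} {q : Fin n → ℕ}

theorem PrefixFree.exists_ne_nil {w v : MultiWord q} (h : PrefixFree w v) :
    ∃ i, w i ≠ [] ∧ v i ≠ [] := by
  obtain ⟨i, hwv, hvw⟩ := h
  refine ⟨i, ?_, ?_⟩ <;> rintro h <;> simp_all

theorem Set.Pairwise.eq_singleton_nil {S : Set (MultiWord q)} (hS : S.Pairwise PrefixFree)
    (hnil : nil ∈ S) : S = {nil} := by
  refine Set.eq_singleton_iff_unique_mem.mpr ⟨hnil, fun w hw => ?_⟩
  by_contra hne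
  obtain ⟨i, hi, -⟩ := (hS hnil hw (Ne.symm hne)).exists_ne_nil
  exact hi rfl

theorem Set.Pairwise.prefixFree_cons_preimage {S : Set (MultiWord q)}
    (hS : S.Pairwise PrefixFree) (i : Fin n) (a : Fin (q i)) :
    (cons i a ⁻¹' S).Pairwise PrefixFree := fun _ hw _ hv hne =>
  (prefixFree_cons_iff i a _ _).mp (hS hw hv ((cons_injective i a).ne hne))

def TreeDecodable (S : Set (MultiWord q)) : Prop :=
  ∃ t : DecTree n q, t.WF ∧ {w | t.LeafWord w} = S

namespace DecTree

theorem leafWord_leaf_iff (w : MultiWord q) : DecTree.LeafWord .leaf w ↔ w = nil := by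
  constructor
  · rintro ⟨⟩
    rfl
  · rintro rfl
    exact .leaf

theorem leafWord_node_iff (i : Fin n) (c : Fin (q i) → Option (DecTree n q)) (w : MultiWord q) :
    DecTree.LeafWord (.node i c) w ↔ ∃ a t v, c a = some t ∧ t.LeafWord v ∧ cons i a v = w := by
  constructor
  · intro h
    cases h with
    | node hca hv => exact ⟨_, _, _, hca, hv, rfl⟩
  · rintro ⟨a, t, v, hca, hv, rfl⟩
    exact .node hca hv

end DecTree

theorem treeDecodable_singleton_nil : TreeDecodable ({nil} : Set (MultiWord q)) :=
  ⟨.leaf, .leaf, Set.ext DecTree.leafWord_leaf_iff⟩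

theorem TreeDecodable.of_cons_preimage {S : Set (MultiWord q)} (hS : S.Nonempty) {i : Fin n}
    (hi : ∀ w ∈ S, w i ≠ [])
    (hchild : ∀ a, (cons i a ⁻¹' S).Nonempty → TreeDecodable (cons i a ⁻¹' S)) :
    TreeDecodable S := by
  classical
  choose T hTwf hTleaf using hchild
  let c : Fin (q i) → Option (DecTree n q) := fun a =>
    if h : (cons i a ⁻¹' S).Nonempty then some (T a h) else none
  have hc : ∀ a t, c a = some t ↔ ∃ h, T a h = t := fun a t => by
    simp only [c, Option.dite_none_right_eq_some, Option.some.injEq]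
  refine ⟨.node i c, .node i c ?_ ?_, ?_⟩
  · obtain ⟨w, hw⟩ := hS
    obtain ⟨a, v, rfl⟩ := exists_cons_eq_of_ne_nil (hi w hw)
    exact ⟨a, by simp [c, show (cons i a ⁻¹' S).Nonempty from ⟨v, hw⟩]⟩
  · intro a t hat
    obtain ⟨h, rfl⟩ := (hc a t).mp hat
    exact hTwf a h
  · ext w
    simp only [Set.mem_ofPred_eq, DecTree.leafWord_node_iff]
    constructor
    · rintro ⟨a, t, v, hat, hv, rfl⟩
      obtain ⟨h, rfl⟩ := (hc a t).mp hat
      exact (Set.ext_iff.mp (hTleaf a h) v).mp hv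
    · intro hw
      obtain ⟨a, v, rfl⟩ := exists_cons_eq_of_ne_nil (hi w hw)
      have h : (cons i a ⁻¹' S).Nonempty := ⟨v, hw⟩
      exact ⟨a, T a h, v, (hc a _).mpr ⟨h, rfl⟩, (Set.ext_iff.mp (hTleaf a h) v).mpr hw, rfl⟩

end

section

variable {q : Fin 2 → ℕ}

theorem Set.Pairwise.nil_mem_or_exists_forall_ne_nil {S : Set (MultiWord q)}
    (hS : S.Pairwise PrefixFree) : nil ∈ S ∨ ∃ i, ∀ w ∈ S, w i ≠ [] := by
  by_contra! ⟨hnil, h⟩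
  obtain ⟨w, hw, hw0⟩ := h 0
  obtain ⟨v, hv, hv1⟩ := h 1
  have hwv : w ≠ v := by
    rintro rfl
    exact hnil (by rwa [show w = nil from funext fun j => by fin_cases j <;> assumption] at hw)
  obtain ⟨i, hwi, hvi⟩ := (hS hw hv hwv).exists_ne_nil
  fin_cases i <;> simp_all

theorem treeDecodable_of_pairwise_prefixFree_of_totalLength_le (N : ℕ) :
    ∀ {S : Set (MultiWord q)}, S.Nonempty → S.Pairwise PrefixFree →
      (∀ w ∈ S, w.totalLength ≤ N) → TreeDecodable S := by
  induction N using Nat.strong_induction_on with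
  | _ N ih =>
  intro S hne hS hN
  rcases hS.nil_mem_or_exists_forall_ne_nil with hnil | ⟨i, hi⟩
  · rw [hS.eq_singleton_nil hnil]
    exact treeDecodable_singleton_nil
  · refine .of_cons_preimage hne hi fun a ⟨v, hv⟩ => ?_
    have hlt : ∀ u ∈ cons i a ⁻¹' S, u.totalLength < N := fun u hu =>
      (totalLength_cons i a u).symm.trans_le (hN _ hu)
    exact ih (N - 1) (Nat.sub_one_lt_of_lt (hlt v hv)) ⟨v, hv⟩
      (hS.prefixFree_cons_preimage i a) fun u hu => Nat.le_sub_one_of_lt (hlt u hu)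

theorem treeDecodable_of_pairwise_prefixFree {S : Set (MultiWord q)}
    (hfin : S.Finite) (hne : S.Nonempty) (hS : S.Pairwise PrefixFree) : TreeDecodable S := by
  obtain ⟨N, hN⟩ := (hfin.image totalLength).bddAbove
  exact treeDecodable_of_pairwise_prefixFree_of_totalLength_le N hne hS
    fun w hw => hN (Set.mem_image_of_mem _ hw)

end

theorem two_channel_prefix_code_is_tree_decodable_general
    (q : Fin 2 → ℕ) (m : ℕ) (hm : 1 ≤ m)
    (C : Fin m → ∀ i, List (Fin (q i))) (hC : IsPrefixCode C) :
    ∃ t : DecTree 2 q, t.WF ∧ {w | t.LeafWord w} = Set.range C :=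
  treeDecodable_of_pairwise_prefixFree (Set.finite_range C) ⟨C ⟨0, hm⟩, Set.mem_range_self _⟩
    (Pairwise.range_pairwise hC)

/-- **Every `2`-channel prefix code (with finitely many codewords) is tree-decodable**:
there exists a decoding tree whose leaves' associated words are exactly the codewords of the
code. -/
theorem two_channel_prefix_code_is_tree_decodable
    (q : Fin 2 → ℕ) (hq : ∀ i, 2 ≤ q i) (m : ℕ) (hm : 1 ≤ m)
    (C : Fin m → ∀ i, List (Fin (q i))) (hC : IsPrefixCode C) :
    ∃ t : DecTree 2 q, t.WF ∧ {w | t.LeafWord w} = Set.range C :=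
  two_channel_prefix_code_is_tree_decodable_general q m hm C hC
end
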